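/- For every m ≥ 0 there exist integers a_{m,1}, …, a_{m,m+1} (independent of n) such that for all n ≥ 0, the number of compositions of the complete bipartite graph satisfies C(K_{m,n}) = Σ_{i=1}^{m+1} a_{m,i} · i^n. -/

import Mathlib

/-- `compCount G` is the number of compositions of the finite simple graph `G`, i.e. the
number of partitions of its vertex set into nonempty blocks each of which induces a
connected subgraph of `G`. -/
noncomputable def compCount {V : Type*} [Fintype V] [DecidableEq V] (G : SimpleGraph V) : ℕ :=
  Nat.card {P : Finpartition (Finset.univ : Finset V) //
    ∀ B ∈ P.parts, (G.induce (↑B : Set V)).Connected}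

/-!
A block of a composition of `K_{V,W}` is either a single vertex or meets both sides. So a
composition amounts to a partition `Q` of `V` together with the map sending each `j : W` to the
set of left vertices in its block, which is either empty (`j` is alone) or a block of `Q`, and
which must hit every block of `Q` with at least two vertices. For fixed `Q` with `k` blocks,
inclusion–exclusion over the set `t` of big blocks that are missed counts these maps as
`∑ₜ (-1)^|t| (k + 1 - |t|)^|W|`. Every base `k + 1 - |t|` lies in `[1, |V| + 1]`, and collecting
terms by base gives the coefficients.
-/

open Finset

lemma Finset.card_filter_piFinset_forall_exists_eq {ι γ : Type*} [Fintype ι] [DecidableEq ι]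
    [Fintype γ] [DecidableEq γ] {s u : Finset γ} (hsu : s ⊆ u) :
    (#{f ∈ Fintype.piFinset fun _ : ι => u | ∀ x ∈ s, ∃ i, f i = x} : ℤ) =
      ∑ t ∈ s.powerset, (-1) ^ #t * ((#u - #t : ℕ) : ℤ) ^ Fintype.card ι := by
  let avoid (x : γ) : Finset (ι → γ) := {f | ∀ i, f i ≠ x}
  have key := inclusion_exclusion_sum_inf_compl s avoid
    (fun f => if f ∈ Fintype.piFinset fun _ => u then (1 : ℤ) else 0)
  simp only [sum_boole, smul_eq_mul] at key
  have hcover : {f ∈ Fintype.piFinset fun _ : ι => u | ∀ x ∈ s, ∃ i, f i = x} =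
      {f ∈ s.inf fun x => (avoid x)ᶜ | f ∈ Fintype.piFinset fun _ => u} := by
    ext f
    simp [avoid, mem_inf, and_comm]
  rw [hcover, key]
  refine sum_congr rfl fun t ht => ?_
  have havoid : {f ∈ t.inf avoid | f ∈ Fintype.piFinset fun _ => u} =
      Fintype.piFinset fun _ : ι => u \ t := by
    ext f
    simp only [avoid, mem_filter, mem_inf, mem_univ, true_and, Fintype.mem_piFinset, mem_sdiff]
    grind
  rw [havoid, Fintype.card_piFinset, prod_const, card_univ,
    card_sdiff_of_subset ((mem_powerset.1 ht).trans hsu), Nat.cast_pow]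

lemma Finset.exists_sum_mul_pow_eq_of_mapsTo {ι : Type*} (s : Finset ι) (c : ι → ℤ) (b : ι → ℕ)
    {I : Finset ℕ} (hb : ∀ x ∈ s, b x ∈ I) :
    ∃ a : ℕ → ℤ, ∀ n, ∑ x ∈ s, c x * (b x : ℤ) ^ n = ∑ i ∈ I, a i * (i : ℤ) ^ n := by
  refine ⟨fun i => ∑ x ∈ s with b x = i, c x, fun n => ?_⟩
  rw [← sum_fiberwise_of_maps_to hb]
  refine sum_congr rfl fun i _ => ?_
  rw [sum_mul]
  exact sum_congr rfl fun x hx => by rw [(mem_filter.1 hx).2]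

instance Setoid.decidableRelKer {α β : Type*} [DecidableEq β] (g : α → β) :
    DecidableRel (Setoid.ker g).r :=
  fun _ _ => decidable_of_iff _ Setoid.ker_def.symm

namespace Finpartition

variable {α β : Type*} [Fintype α] [DecidableEq α]

lemma ext_part {P Q : Finpartition (univ : Finset α)} (h : ∀ a, P.part a = Q.part a) : P = Q := by
  ext t
  constructor <;> intro ht
  · obtain ⟨a, -, rfl⟩ := P.part_surjOn ht
    simp [h a]
  · obtain ⟨a, -, rfl⟩ := Q.part_surjOn ht
    simp [← h a]

-- Generic in the instance, so that these lemmas apply whichever instance `ofSetoid` received.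
variable {g : α → β} [DecidableRel (Setoid.ker g).r] {a b : α}

lemma mem_part_ofSetoid_ker : b ∈ (ofSetoid (Setoid.ker g)).part a ↔ g a = g b :=
  mem_part_ofSetoid_iff_rel.trans Setoid.ker_def

lemma part_ofSetoid_ker_eq_iff :
    (ofSetoid (Setoid.ker g)).part a = (ofSetoid (Setoid.ker g)).part b ↔ g a = g b := by
  rw [← mem_part_iff_part_eq_part _ (mem_univ a) (mem_univ b), mem_part_ofSetoid_ker, eq_comm]

lemma ofSetoid_ker_eq {P : Finpartition (univ : Finset α)}
    (h : ∀ a b, g a = g b ↔ P.part a = P.part b) : ofSetoid (Setoid.ker g) = P :=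
  ext_part fun a => by
    ext b
    rw [mem_part_ofSetoid_ker, h, P.mem_part_iff_part_eq_part (mem_univ b) (mem_univ a), eq_comm]

end Finpartition

open Sum

lemma completeBipartiteGraph_induce_connected_iff {V W : Type*} {s : Set (V ⊕ W)} :
    ((completeBipartiteGraph V W).induce s).Connected ↔
      (∃ v, s = {v}) ∨ ((∃ a, inl a ∈ s) ∧ ∃ b, inr b ∈ s) := by
  constructor
  · intro h
    obtain ⟨x⟩ := h.nonempty
    rcases s.subsingleton_or_nontrivial with hs | hs
    · exact Or.inl ⟨x, hs.eq_singleton_of_mem x.2⟩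
    have : Nontrivial s := hs.coe_sort
    obtain ⟨⟨y, hy⟩, hxy⟩ := h.preconnected.exists_adj_of_nontrivial x
    obtain ⟨x, hx⟩ := x
    rcases x with a | b <;> rcases y with a' | b'
    · simp at hxy
    · exact Or.inr ⟨⟨a, hx⟩, b', hy⟩
    · exact Or.inr ⟨⟨a', hy⟩, b, hx⟩
    · simp at hxy
  · rintro (⟨v, rfl⟩ | ⟨⟨a, ha⟩, b, hb⟩)
    · exact .of_subsingleton
    refine (SimpleGraph.connected_iff _).2 ⟨fun x y => ?_, ⟨⟨_, ha⟩⟩⟩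
    -- every vertex reaches `inr b`, directly or through `inl a`
    have hub : ∀ v : s, ((completeBipartiteGraph V W).induce s).Reachable v ⟨_, hb⟩ := by
      rintro ⟨_ | _, hv⟩
      · exact SimpleGraph.Adj.reachable (by simp)
      · exact .trans (SimpleGraph.Adj.reachable (v := ⟨_, ha⟩) (by simp))
          (SimpleGraph.Adj.reachable (by simp))
    exact (hub x).trans (hub y).symm

namespace CompleteBipartiteComposition

section Label

variable {V W : Type*} [DecidableEq V]

-- `∅` marks a right vertex that forms a block by itself: such vertices get distinct labels.
def label (B : Finset V) (v : V ⊕ W) : Finset V ⊕ (V ⊕ W) :=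
  if B = ∅ then inr v else inl B

lemma label_eq_label_iff {B C : Finset V} {v w : V ⊕ W} :
    label B v = label C w ↔ B = C ∧ (B = ∅ → v = w) := by
  unfold label
  split_ifs <;> simp_all [eq_comm]

end Label

variable {V W : Type*} [Fintype V] [DecidableEq V] [Fintype W] [DecidableEq W]

def leftPartition (P : Finpartition (univ : Finset (V ⊕ W))) : Finpartition (univ : Finset V) :=
  Finpartition.ofSetoid (Setoid.ker fun a => P.part (inl a))

def rightTrace (P : Finpartition (univ : Finset (V ⊕ W))) (j : W) : Finset V :=
  (P.part (inr j)).toLeft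

def Admissible (Q : Finpartition (univ : Finset V)) (f : W → Finset V) : Prop :=
  (∀ j, f j ∈ insert ∅ Q.parts) ∧ ∀ B ∈ Q.parts, 1 < #B → ∃ j, f j = B

def glue (Q : Finpartition (univ : Finset V)) (f : W → Finset V) :
    Finpartition (univ : Finset (V ⊕ W)) :=
  Finpartition.ofSetoid (Setoid.ker fun v => label (Sum.elim Q.part f v) v)

lemma mem_part_glue {Q : Finpartition (univ : Finset V)} {f : W → Finset V} {v w : V ⊕ W} :
    w ∈ (glue Q f).part v ↔
      Sum.elim Q.part f v = Sum.elim Q.part f w ∧ (Sum.elim Q.part f v = ∅ → v = w) := by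
  rw [glue, Finpartition.mem_part_ofSetoid_ker, label_eq_label_iff]

lemma part_leftPartition (P : Finpartition (univ : Finset (V ⊕ W))) (a : V) :
    (leftPartition P).part a = (P.part (inl a)).toLeft := by
  ext b
  rw [leftPartition, Finpartition.mem_part_ofSetoid_ker, mem_toLeft,
    P.mem_part_iff_part_eq_part (mem_univ _) (mem_univ _), eq_comm]

lemma elim_leftPartition_rightTrace (P : Finpartition (univ : Finset (V ⊕ W))) (v : V ⊕ W) :
    Sum.elim (leftPartition P).part (rightTrace P) v = (P.part v).toLeft := by
  cases v <;> simp [part_leftPartition, rightTrace]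

section Composition

variable {P : Finpartition (univ : Finset (V ⊕ W))}
  (hP : ∀ B ∈ P.parts, ((completeBipartiteGraph V W).induce (B : Set (V ⊕ W))).Connected)
include hP

lemma part_eq_singleton_or_nonempty_toLeft_toRight (v : V ⊕ W) :
    P.part v = {v} ∨ ((P.part v).toLeft.Nonempty ∧ (P.part v).toRight.Nonempty) := by
  rcases completeBipartiteGraph_induce_connected_iff.1 (hP _ (P.part_mem.2 (mem_univ v))) with
    ⟨w, hw⟩ | ⟨⟨a, ha⟩, b, hb⟩
  · rw [coe_eq_singleton] at hw
    have hv := P.mem_part (mem_univ v)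
    rw [hw, mem_singleton] at hv
    exact Or.inl (hv ▸ hw)
  · exact Or.inr ⟨⟨a, mem_toLeft.2 ha⟩, b, mem_toRight.2 hb⟩

lemma part_eq_singleton_of_toLeft_eq_empty {v : V ⊕ W} (h : (P.part v).toLeft = ∅) :
    P.part v = {v} := by
  simpa [h] using part_eq_singleton_or_nonempty_toLeft_toRight hP v

lemma exists_inr_mem_part_of_one_lt_card {v : V ⊕ W} (h : 1 < #(P.part v).toLeft) :
    ∃ j, inr j ∈ P.part v := by
  rcases part_eq_singleton_or_nonempty_toLeft_toRight hP v with hv | ⟨-, j, hj⟩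
  · have := card_toLeft_le.trans_eq (card_singleton v)
    rw [← hv] at this
    omega
  · exact ⟨j, mem_toRight.1 hj⟩

lemma admissible_leftPartition_rightTrace : Admissible (leftPartition P) (rightTrace P) := by
  refine ⟨fun j => ?_, fun B hB hcard => ?_⟩
  · rcases (rightTrace P j).eq_empty_or_nonempty with h | ⟨a, ha⟩
    · exact h ▸ mem_insert_self _ _
    refine mem_insert_of_mem ?_
    rw [rightTrace, mem_toLeft] at ha
    rw [rightTrace, ← P.part_eq_of_mem (P.part_mem.2 (mem_univ _)) ha, ← part_leftPartition]
    exact (leftPartition P).part_mem.2 (mem_univ a)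
  · obtain ⟨a, -, rfl⟩ := (leftPartition P).part_surjOn hB
    rw [part_leftPartition] at hcard ⊢
    obtain ⟨j, hj⟩ := exists_inr_mem_part_of_one_lt_card hP hcard
    exact ⟨j, by rw [rightTrace, P.part_eq_of_mem (P.part_mem.2 (mem_univ _)) hj]⟩

lemma glue_leftPartition_rightTrace : glue (leftPartition P) (rightTrace P) = P := by
  refine Finpartition.ofSetoid_ker_eq fun v w => ?_
  simp only [elim_leftPartition_rightTrace, label_eq_label_iff]
  constructor
  · rintro ⟨heq, hempty⟩
    rcases (P.part v).toLeft.eq_empty_or_nonempty with h | ⟨a, ha⟩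
    · rw [hempty h]
    have hb : a ∈ (P.part w).toLeft := heq ▸ ha
    exact P.eq_of_mem_parts (P.part_mem.2 (mem_univ _)) (P.part_mem.2 (mem_univ _))
      (mem_toLeft.1 ha) (mem_toLeft.1 hb)
  · intro heq
    refine ⟨by rw [heq], fun h => ?_⟩
    have hw := P.mem_part (mem_univ w)
    rw [← heq, part_eq_singleton_of_toLeft_eq_empty hP h, mem_singleton] at hw
    exact hw.symm

end Composition

section Glue

variable {Q : Finpartition (univ : Finset V)} {f : W → Finset V}

lemma leftPartition_glue : leftPartition (glue Q f) = Q := by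
  refine Finpartition.ofSetoid_ker_eq fun a b => ?_
  rw [glue, Finpartition.part_ofSetoid_ker_eq_iff, label_eq_label_iff]
  simp

lemma rightTrace_glue (hf : ∀ j, f j ∈ insert ∅ Q.parts) : rightTrace (glue Q f) = f := by
  ext j a
  rw [rightTrace, mem_toLeft, mem_part_glue]
  rcases mem_insert.1 (hf j) with h | h
  · simp [h, eq_comm (a := ∅)]
  · simp [Q.part_eq_iff_mem h, eq_comm (a := f j), (Q.ne_empty h).symm]

lemma glue_connected (h : Admissible Q f) :
    ∀ B ∈ (glue Q f).parts, ((completeBipartiteGraph V W).induce (B : Set (V ⊕ W))).Connected := by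
  intro B hB
  obtain ⟨v, -, rfl⟩ := (glue Q f).part_surjOn hB
  rw [completeBipartiteGraph_induce_connected_iff]
  have hv : Sum.elim Q.part f v ∈ insert ∅ Q.parts := by
    cases v
    exacts [mem_insert_of_mem (Q.part_mem.2 (mem_univ _)), h.1 _]
  rcases mem_insert.1 hv with hv | hv
  · refine Or.inl ⟨v, Set.eq_singleton_iff_unique_mem.2
      ⟨(glue Q f).mem_part (mem_univ v), fun w hw => ((mem_part_glue.1 hw).2 hv).symm⟩⟩
  obtain ⟨a, ha⟩ := Q.nonempty_of_mem_parts hv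
  have hva : inl a ∈ (glue Q f).part v :=
    mem_part_glue.2 ⟨(Q.part_eq_of_mem hv ha).symm, fun h0 => absurd h0 (Q.ne_empty hv)⟩
  by_cases hj : ∃ j, f j = Sum.elim Q.part f v
  · obtain ⟨j, hj⟩ := hj
    exact Or.inr ⟨⟨a, hva⟩, j, mem_part_glue.2 ⟨hj.symm, fun h0 => absurd h0 (Q.ne_empty hv)⟩⟩
  -- an unattached block of `Q` is a singleton `{a}`, so the block of `v` is `{inl a}`
  have hcard : #(Sum.elim Q.part f v) ≤ 1 := not_lt.1 fun h1 => hj (h.2 _ hv h1)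
  refine Or.inl ⟨inl a, Set.eq_singleton_iff_unique_mem.2 ⟨hva, fun w hw => ?_⟩⟩
  obtain ⟨hw, -⟩ := mem_part_glue.1 hw
  rcases w with b | j
  · have hb : b ∈ Sum.elim Q.part f v := hw ▸ Q.mem_part (mem_univ b)
    rw [card_le_one.1 hcard b hb a ha]
  · exact absurd ⟨j, hw.symm⟩ hj

end Glue

def compositionEquiv :
    {P : Finpartition (univ : Finset (V ⊕ W)) //
        ∀ B ∈ P.parts, ((completeBipartiteGraph V W).induce (B : Set (V ⊕ W))).Connected} ≃
      {Qf : Finpartition (univ : Finset V) × (W → Finset V) // Admissible Qf.1 Qf.2} where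
  toFun P := ⟨(leftPartition P.1, rightTrace P.1), admissible_leftPartition_rightTrace P.2⟩
  invFun Qf := ⟨glue Qf.1.1 Qf.1.2, glue_connected Qf.2⟩
  left_inv P := Subtype.ext (glue_leftPartition_rightTrace P.2)
  right_inv Qf := Subtype.ext (Prod.ext leftPartition_glue (rightTrace_glue Qf.2.1))

lemma card_admissible (Q : Finpartition (univ : Finset V)) :
    (Nat.card {f : W → Finset V // Admissible Q f} : ℤ) =
      ∑ t ∈ {B ∈ Q.parts | 1 < #B}.powerset,
        (-1) ^ #t * ((#Q.parts + 1 - #t : ℕ) : ℤ) ^ Fintype.card W := by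
  classical
  rw [← card_insert_of_notMem Q.empty_notMem_parts,
    ← card_filter_piFinset_forall_exists_eq (filter_subset _ _ |>.trans (subset_insert _ _)),
    Nat.card_eq_fintype_card, Fintype.card_subtype]
  congr 2
  ext f
  simp [Admissible]

end CompleteBipartiteComposition

open CompleteBipartiteComposition in
theorem compCount_completeBipartiteGraph_eq_sum (V W : Type*) [Fintype V] [DecidableEq V]
    [Fintype W] [DecidableEq W] :
    (compCount (completeBipartiteGraph V W) : ℤ) =
      ∑ Q : Finpartition (univ : Finset V), ∑ t ∈ {B ∈ Q.parts | 1 < #B}.powerset,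
        (-1) ^ #t * ((#Q.parts + 1 - #t : ℕ) : ℤ) ^ Fintype.card W := by
  rw [compCount, Nat.card_congr (compositionEquiv.trans
    (Equiv.subtypeProdEquivSigmaSubtype fun Q f => Admissible Q f)), Nat.card_sigma, Nat.cast_sum]
  exact sum_congr rfl fun Q _ => card_admissible Q

/-- **Knopfmacher–Mays formula, existence form.**
For every `m ≥ 0` there exist integers `a_{m,1}, …, a_{m,m+1}` (independent of `n`) such that
`C(K_{m,n}) = ∑_{i=1}^{m+1} a_{m,i} · iⁿ` for all `n ≥ 0`. -/
theorem compCount_completeBipartiteGraph_exists_coeffs (m : ℕ) :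
    ∃ a : ℕ → ℤ, ∀ n : ℕ,
      (compCount (completeBipartiteGraph (Fin m) (Fin n)) : ℤ) =
        ∑ i ∈ Finset.Icc 1 (m + 1), a i * (i : ℤ) ^ n := by
  have hbase : ∀ x ∈ univ.sigma fun Q : Finpartition (univ : Finset (Fin m)) =>
      {B ∈ Q.parts | 1 < #B}.powerset, #x.1.parts + 1 - #x.2 ∈ Icc 1 (m + 1) := by
    rintro ⟨Q, t⟩ ht
    have htQ : #t ≤ #Q.parts :=
      (card_le_card (mem_powerset.1 (mem_sigma.1 ht).2)).trans (card_filter_le _ _)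
    have hQ : #Q.parts ≤ m := by simpa using Q.card_parts_le_card
    simp only [mem_Icc]
    omega
  obtain ⟨a, ha⟩ := exists_sum_mul_pow_eq_of_mapsTo _ (fun x => (-1) ^ #x.2) _ hbase
  refine ⟨a, fun n => ?_⟩
  rw [compCount_completeBipartiteGraph_eq_sum, Fintype.card_fin, sum_sigma', ha]
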